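/- arXiv:2103.04150 — 6 statements merged into one kernel-verified Lean document; each statement's English description precedes it below -/
import Mathlib

section
/- Let γ be a composition of n and fix π ∈ Π_γ. For each μ ∈ Π_γ set V_{π,μ} := {σ ∈ S_n : σ·μ = π}. Then the sets {V_{π,μ}}_{μ∈Π_γ} form a partition of S_n into nonempty classes, and this partition is equitable for the permutahedron P_n: for every pair μ, ν ∈ Π_γ and every σ ∈ V_{π,μ}, the number of neighbors of σ in P_n lying in V_{π,ν} equals K(μ,ν), where for μ ≠ ν one has K(μ,ν) = 1 if there exists an adjacent transposition s with s·μ = ν and K(μ,ν) = 0 otherwise, and K(μ,μ) equals the number of adjacent transpositions s with s·μ = μ. -/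
open Finset

/-- Ordered set partitions of `Fin n` of shape `γ : Fin ℓ → ℕ`: functions
`μ : Fin n → Fin ℓ` whose `j`-th block `μ⁻¹(j)` has exactly `γ j` elements. -/
def OSP (n ℓ : ℕ) (γ : Fin ℓ → ℕ) : Type :=
  {μ : Fin n → Fin ℓ // ∀ j : Fin ℓ, (Finset.univ.filter fun x => μ x = j).card = γ j}

instance {n ℓ : ℕ} {γ : Fin ℓ → ℕ} : Fintype (OSP n ℓ γ) := by
  unfold OSP; infer_instance

instance {n ℓ : ℕ} {γ : Fin ℓ → ℕ} : DecidableEq (OSP n ℓ γ) := by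
  unfold OSP; infer_instance

/-- The left action of `S_n` on ordered set partitions: `(σ · μ)(x) = μ (σ⁻¹ x)`. -/
def ospAct {n ℓ : ℕ} {γ : Fin ℓ → ℕ} (σ : Equiv.Perm (Fin n)) (μ : OSP n ℓ γ) : OSP n ℓ γ :=
  ⟨fun x => μ.1 (σ.symm x), fun j => by
    rw [← μ.2 j, ← Fintype.card_subtype, ← Fintype.card_subtype]
    exact Fintype.card_congr (σ.symm.subtypeEquiv fun a => Iff.rfl)⟩

/-- The characteristic ("lifting") map `B_π : ℝ^{Π_γ} → ℝ^{S_n}` given by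
`(B_π x)(σ) = x (σ⁻¹ · π)`. -/
def liftB {n ℓ : ℕ} {γ : Fin ℓ → ℕ} (π : OSP n ℓ γ) (x : OSP n ℓ γ → ℝ) :
    Equiv.Perm (Fin n) → ℝ :=
  fun σ => x (ospAct σ⁻¹ π)

/-- The adjacent transposition `(i, i+1)` of `Fin n`, for `i : Fin (n-1)`. -/
def adjT {n : ℕ} (i : Fin (n - 1)) : Equiv.Perm (Fin n) :=
  Equiv.swap ⟨i.val, by have := i.isLt; omega⟩ ⟨i.val + 1, by have := i.isLt; omega⟩

lemma ospAct_mul {n ℓ : ℕ} {γ : Fin ℓ → ℕ} (σ τ : Equiv.Perm (Fin n)) (μ : OSP n ℓ γ) :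
    ospAct (σ * τ) μ = ospAct σ (ospAct τ μ) := rfl

lemma ospAct_one {n ℓ : ℕ} {γ : Fin ℓ → ℕ} (μ : OSP n ℓ γ) : ospAct 1 μ = μ := rfl

lemma ospAct_eq_iff {n ℓ : ℕ} {γ : Fin ℓ → ℕ} (σ : Equiv.Perm (Fin n)) (μ ν : OSP n ℓ γ) :
    ospAct σ μ = ν ↔ μ = ospAct σ⁻¹ ν := by
  constructor
  · rintro rfl; rw [← ospAct_mul, inv_mul_cancel, ospAct_one]
  · rintro rfl; rw [← ospAct_mul, mul_inv_cancel, ospAct_one]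

lemma ospAct_adjT_fix {n ℓ : ℕ} {γ : Fin ℓ → ℕ} (μ : OSP n ℓ γ) (i : Fin (n - 1))
    (h : μ.1 ⟨i.val, by have := i.isLt; omega⟩ = μ.1 ⟨i.val + 1, by have := i.isLt; omega⟩) :
    ospAct (adjT i) μ = μ := by
  apply Subtype.ext; funext x
  show μ.1 ((adjT i).symm x) = μ.1 x
  rw [adjT, Equiv.symm_swap, Equiv.swap_apply_def]
  split_ifs with h1 h2
  · rw [h1, ← h]
  · rw [h2, h]
  · rfl

lemma adjT_unique {n ℓ : ℕ} {γ : Fin ℓ → ℕ} (μ ν : OSP n ℓ γ) (hne : μ ≠ ν)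
    (i j : Fin (n - 1)) (hi : ospAct (adjT i) μ = ν) (hj : ospAct (adjT j) μ = ν) : i = j := by
  by_contra hij
  wlog hlt : i.val < j.val generalizing i j
  · have hv : i.val ≠ j.val := fun h => hij (Fin.ext h)
    exact this j i hj hi (Ne.symm hij) (by omega)
  have hfun : ∀ x, μ.1 ((adjT i).symm x) = μ.1 ((adjT j).symm x) :=
    fun x => congrFun (congrArg Subtype.val (hi.trans hj.symm)) x
  have hx := hfun ⟨i.val, by have := i.isLt; omega⟩
  rw [adjT, adjT, Equiv.symm_swap, Equiv.symm_swap, Equiv.swap_apply_left,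
    Equiv.swap_apply_of_ne_of_ne (by simp [Fin.ext_iff]; omega) (by simp [Fin.ext_iff]; omega)] at hx
  exact hne (hi ▸ (ospAct_adjT_fix μ i hx.symm).symm ▸ rfl)

/-- Prop. 1 of the paper: for `π ∈ Π_γ`, the classes
`V_{π,μ} = {σ : σ·μ = π}` are nonempty, partition `S_n` (each `σ` lies in exactly one
class), and form an equitable partition of the permutahedron `P_n`: each `σ ∈ V_{π,μ}`
has exactly `K(μ,ν)` neighbors `σ·(i,i+1)` in `V_{π,ν}`, where `K(μ,μ)` is the number of
adjacent transpositions fixing `μ`, and for `μ ≠ ν`, `K(μ,ν) = 1` if some adjacent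
transposition sends `μ` to `ν` and `K(μ,ν) = 0` otherwise. -/
theorem equitable_partition {n ℓ : ℕ} (hn : 1 ≤ n) (γ : Fin ℓ → ℕ)
    (hsum : ∑ j, γ j = n) (π : OSP n ℓ γ) :
    (∀ μ : OSP n ℓ γ, ∃ σ : Equiv.Perm (Fin n), ospAct σ μ = π) ∧
    (∀ σ : Equiv.Perm (Fin n), ∃! μ : OSP n ℓ γ, ospAct σ μ = π) ∧
    (∀ μ ν : OSP n ℓ γ, ∀ σ : Equiv.Perm (Fin n), ospAct σ μ = π →
      (Finset.univ.filter fun i : Fin (n - 1) => ospAct (σ * adjT i) ν = π).card =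
        if μ = ν then
          (Finset.univ.filter fun i : Fin (n - 1) => ospAct (adjT i) μ = μ).card
        else if ∃ i : Fin (n - 1), ospAct (adjT i) μ = ν then 1 else 0) := by
  refine ⟨?_, ?_, ?_⟩
  · intro μ
    have e : ∀ j : Fin ℓ, {x : Fin n // μ.1 x = j} ≃ {x : Fin n // π.1 x = j} := fun j =>
      Fintype.equivOfCardEq (by
        rw [Fintype.card_subtype, Fintype.card_subtype, μ.2 j, π.2 j])
    let σ : Equiv.Perm (Fin n) :=
      (Equiv.sigmaFiberEquiv μ.1).symm.trans
        ((Equiv.sigmaCongrRight e).trans (Equiv.sigmaFiberEquiv π.1))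
    have key : ∀ y, π.1 (σ y) = μ.1 y := fun y => ((e (μ.1 y)) ⟨y, rfl⟩).2
    refine ⟨σ, Subtype.ext (funext fun x => ?_)⟩
    show μ.1 (σ.symm x) = π.1 x
    rw [← key (σ.symm x), Equiv.apply_symm_apply]
  · intro σ
    refine ⟨ospAct σ⁻¹ π, ?_, fun μ hμ => (ospAct_eq_iff σ μ π).mp hμ⟩
    show ospAct σ (ospAct σ⁻¹ π) = π
    rw [← ospAct_mul, mul_inv_cancel, ospAct_one]
  · intro μ ν σ hσ
    have hμ : μ = ospAct σ⁻¹ π := (ospAct_eq_iff σ μ π).mp hσ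
    have hcond : ∀ i : Fin (n - 1), (ospAct (σ * adjT i) ν = π ↔ ospAct (adjT i) μ = ν) := by
      intro i
      rw [ospAct_eq_iff, mul_inv_rev, ospAct_mul, ← hμ, show (adjT i)⁻¹ = adjT i from
        Equiv.swap_inv _ _, eq_comm]
    have hfilt : (Finset.univ.filter fun i : Fin (n - 1) => ospAct (σ * adjT i) ν = π) =
        (Finset.univ.filter fun i : Fin (n - 1) => ospAct (adjT i) μ = ν) :=
      Finset.filter_congr fun i _ => by rw [hcond i]
    rw [hfilt]
    by_cases hmn : μ = ν
    · rw [if_pos hmn, hmn]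
    · rw [if_neg hmn]
      by_cases hex : ∃ i : Fin (n - 1), ospAct (adjT i) μ = ν
      · rw [if_pos hex]
        obtain ⟨i0, hi0⟩ := hex
        rw [Finset.card_eq_one]
        refine ⟨i0, ?_⟩
        ext j
        simp only [Finset.mem_filter, Finset.mem_univ, true_and, Finset.mem_singleton]
        exact ⟨fun hj => adjT_unique μ ν hmn j i0 hj hi0, fun h => h ▸ hi0⟩
      · rw [if_neg hex, Finset.card_eq_zero, Finset.filter_eq_empty_iff]
        exact fun i _ => fun h => hex ⟨i, h⟩
end

section
/- For every composition γ of n and every π ∈ Π_γ, the adjacency matrix A_{P_n} of the permutahedron (the n!×n! 0–1 matrix with A_{P_n}(σ,τ) = 1 iff τ = σ·(i,i+1) for some 1 ≤ i ≤ n−1) and the adjacency matrix A_{P_γ} of the Schreier graph satisfy the intertwining identity A_{P_n}·B_π = B_π·A_{P_γ}. (This expresses that the quotient of P_n by the equitable partition {V_{π,μ}}_{μ∈Π_γ} is isomorphic to the Schreier graph P_γ.) -/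
open Finset

/-- The adjacency matrix of the permutahedron `P_n`: `A(σ,τ) = 1` iff
`τ = σ·(i,i+1)` for some `1 ≤ i ≤ n-1`. -/
def adjP (n : ℕ) : Matrix (Equiv.Perm (Fin n)) (Equiv.Perm (Fin n)) ℝ :=
  Matrix.of fun σ τ => if ∃ i : Fin (n - 1), τ = σ * adjT i then 1 else 0

/-- The adjacency matrix of the Schreier graph `P_γ`:
`A(μ,ν) = #{1 ≤ i ≤ n-1 : (i,i+1)·μ = ν}`. -/
def adjS (n ℓ : ℕ) (γ : Fin ℓ → ℕ) : Matrix (OSP n ℓ γ) (OSP n ℓ γ) ℝ :=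
  Matrix.of fun μ ν =>
    ((Finset.univ.filter fun i : Fin (n - 1) => ospAct (adjT i) μ = ν).card : ℝ)

/-- The characteristic matrix `B_π`: the `(σ,μ)` entry is `1` iff `σ·μ = π`. -/
def charM {n ℓ : ℕ} {γ : Fin ℓ → ℕ} (π : OSP n ℓ γ) :
    Matrix (Equiv.Perm (Fin n)) (OSP n ℓ γ) ℝ :=
  Matrix.of fun σ μ => if ospAct σ μ = π then 1 else 0

lemma ospAct_inv_act {n ℓ : ℕ} {γ : Fin ℓ → ℕ} (σ : Equiv.Perm (Fin n)) (μ : OSP n ℓ γ) :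
    ospAct σ⁻¹ (ospAct σ μ) = μ := by
  apply Subtype.ext; funext x; simp [ospAct, Equiv.Perm.inv_def]

lemma adjT_injective {n : ℕ} : Function.Injective (adjT (n := n)) := by
  intro i j h
  have hi : i.val < n - 1 := i.isLt
  have hj : j.val < n - 1 := j.isLt
  have h1 : ((adjT i ⟨i.val, by omega⟩ : Fin n) : ℕ)
      = ((adjT j ⟨i.val, by omega⟩ : Fin n) : ℕ) := by rw [h]
  simp only [adjT, Equiv.swap_apply_def, Fin.ext_iff] at h1
  have := Fin.ext_iff (a := i) (b := j)
  split_ifs at h1 <;> simp_all <;> omega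

/-- the adjacency matrices of the permutahedron and of the Schreier
graph intertwine through the characteristic matrix: `A_{P_n} B_π = B_π A_{P_γ}`. -/
theorem adj_intertwine {n ℓ : ℕ} (hn : 1 ≤ n) (γ : Fin ℓ → ℕ) (hsum : ∑ j, γ j = n)
    (π : OSP n ℓ γ) :
    adjP n * charM π = charM π * adjS n ℓ γ := by
  ext σ μ
  rw [Matrix.mul_apply, Matrix.mul_apply]
  have hinj : Function.Injective (fun i : Fin (n - 1) => σ * adjT i) := by
    intro i j h
    exact adjT_injective (mul_left_cancel h)
  have himg : (univ.filter fun τ : Equiv.Perm (Fin n) => ∃ i : Fin (n - 1), τ = σ * adjT i)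
      = univ.image fun i => σ * adjT i := by
    ext τ; simp [eq_comm]
  have hL : ∑ τ, adjP n σ τ * charM π τ μ
      = ((univ.filter fun i : Fin (n - 1) => ospAct (σ * adjT i) μ = π).card : ℝ) := by
    simp only [adjP, charM, Matrix.of_apply, ite_mul, one_mul, zero_mul]
    rw [← Finset.sum_filter, himg,
      Finset.sum_image (fun a _ b _ h => hinj h), Finset.sum_boole]
  have hR : ∑ ν, charM π σ ν * adjS n ℓ γ ν μ
      = ((univ.filter fun i : Fin (n - 1) =>
          ospAct (adjT i) (ospAct σ⁻¹ π) = μ).card : ℝ) := by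
    simp only [charM, adjS, Matrix.of_apply, ospAct_eq_iff σ, ite_mul, one_mul, zero_mul]
    rw [Finset.sum_ite_eq' univ (ospAct σ⁻¹ π)]
    simp
  rw [hL, hR]
  congr 2
  apply Finset.filter_congr
  intro i _
  rw [ospAct_mul, ospAct_eq_iff σ, ospAct_eq_iff (adjT i), adjT,
    Equiv.swap_inv, eq_comm]
end

section
/- Let γ be a composition of n, π ∈ Π_γ, λ ∈ ℝ, and v : Π_γ → ℝ. If v is a graph Laplacian eigenvector of the Schreier graph P_γ with eigenvalue λ (i.e., L_{P_γ} v = λ v and v ≠ 0), then B_π v is a graph Laplacian eigenvector of the permutahedron P_n with the same eigenvalue λ (i.e., L_{P_n}(B_π v) = λ·(B_π v) and B_π v ≠ 0). In particular, every Laplacian eigenvalue of P_γ is a Laplacian eigenvalue of P_n. -/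
open Finset

/-- The graph Laplacian of the permutahedron `P_n`. -/
def lapP (n : ℕ) (f : Equiv.Perm (Fin n) → ℝ) : Equiv.Perm (Fin n) → ℝ :=
  fun σ => ∑ i : Fin (n - 1), (f σ - f (σ * adjT i))

/-- The graph Laplacian of the Schreier graph `P_γ`. -/
def lapS {n ℓ : ℕ} {γ : Fin ℓ → ℕ} (x : OSP n ℓ γ → ℝ) : OSP n ℓ γ → ℝ :=
  fun μ => ∑ i : Fin (n - 1), (x μ - x (ospAct (adjT i) μ))

lemma adjT_inv {n : ℕ} (i : Fin (n - 1)) : (adjT i)⁻¹ = adjT i := by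
  simp [adjT, Equiv.swap_inv]

/-- Prop. 4 of the paper: Laplacian eigenvectors of the Schreier
graph `P_γ` lift, via `B_π`, to Laplacian eigenvectors of the permutahedron `P_n`
with the same eigenvalue. -/
theorem lift_eigenvector {n ℓ : ℕ} (hn : 1 ≤ n) (γ : Fin ℓ → ℕ) (hsum : ∑ j, γ j = n)
    (π : OSP n ℓ γ) (lam : ℝ) (v : OSP n ℓ γ → ℝ)
    (heig : lapS v = fun μ => lam * v μ) (hv : v ≠ 0) :
    lapP n (liftB π v) = (fun σ => lam * liftB π v σ) ∧ liftB π v ≠ 0 := by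
  have hmul : ∀ (σ τ : Equiv.Perm (Fin n)) (μ : OSP n ℓ γ),
      ospAct (σ * τ) μ = ospAct σ (ospAct τ μ) := by
    intro σ τ μ; apply Subtype.ext; funext x; rfl
  constructor
  · funext σ
    have : lapP n (liftB π v) σ = lapS v (ospAct σ⁻¹ π) := by
      unfold lapP lapS liftB
      refine Finset.sum_congr rfl fun i _ => ?_
      have : (σ * adjT i)⁻¹ = adjT i * σ⁻¹ := by rw [mul_inv_rev, adjT_inv]
      rw [this, hmul]
    rw [this, heig]
    rfl
  · intro h
    obtain ⟨μ, hμ⟩ : ∃ μ, v μ ≠ 0 := by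
      by_contra hc; push_neg at hc; exact hv (funext hc)
    -- build σ with ospAct σ π = μ
    have hcard : ∀ j : Fin ℓ, Fintype.card {x // π.1 x = j} = Fintype.card {x // μ.1 x = j} := by
      intro j
      rw [Fintype.card_subtype, Fintype.card_subtype, π.2 j, μ.2 j]
    let e : ∀ j : Fin ℓ, {x // π.1 x = j} ≃ {x // μ.1 x = j} :=
      fun j => Fintype.equivOfCardEq (hcard j)
    let σ : Equiv.Perm (Fin n) :=
      ((Equiv.sigmaFiberEquiv π.1).symm.trans
        (Equiv.sigmaCongrRight e)).trans (Equiv.sigmaFiberEquiv μ.1)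
    have hσ : ∀ x, μ.1 (σ x) = π.1 x := by
      intro x
      simp only [σ, Equiv.trans_apply, Equiv.sigmaCongrRight_apply, Equiv.sigmaFiberEquiv]
      exact (e (π.1 x) ⟨x, rfl⟩).2
    have hact : ospAct σ π = μ := by
      apply Subtype.ext; funext x
      show π.1 (σ.symm x) = μ.1 x
      rw [← hσ (σ.symm x), Equiv.apply_symm_apply]
    have := congrFun h σ⁻¹
    simp only [liftB, inv_inv, hact, Pi.zero_apply] at this
    exact hμ this
end

section
/- (Core of Theorem 1.) Let γ be a composition of n, π ∈ Π_γ, and v ∈ ℝ^{Π_γ} with ‖v‖ = 1. Let M := span{ρ_L(σ)(B_π v) : σ ∈ S_n} ⊆ ℝ^{S_n}, a subspace invariant under the left S_n-action, and suppose M is irreducible (simple as an S_n-module under ρ_L). Put d := dim M. Then the family {√(d/n!)·B_μ v : μ ∈ Π_γ} is a tight Parseval frame for M: for every f ∈ M, f = (d/n!)·∑_{μ∈Π_γ} ⟨f, B_μ v⟩·B_μ v, and equivalently ∑_{μ∈Π_γ} |⟨f, √(d/n!)·B_μ v⟩|² = ‖f‖². -/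
open Finset
open scoped Nat

/-- The left regular representation of `S_n` on `ℝ^{S_n}`: `(ρ_L(τ) f)(σ) = f (τ⁻¹ σ)`. -/
def rhoL {n : ℕ} (τ : Equiv.Perm (Fin n)) (f : Equiv.Perm (Fin n) → ℝ) :
    Equiv.Perm (Fin n) → ℝ :=
  fun σ => f (τ⁻¹ * σ)

/-!
The frame operator `T f = ∑_μ ⟨f, B_μ v⟩ B_μ v` is symmetric, takes values in `M`, vanishes on
`Mᗮ`, and commutes with `ρ_L` because `S_n` permutes the vectors `B_μ v`. By Schur's lemma `T` acts
on the irreducible `M` as a scalar `c`, so `T = c • P_M` and comparing traces gives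
`c * d = tr T = ∑_μ ‖B_μ v‖² = n! ‖v‖² = n!`. Both identities are then `T f = (n!/d) f`.
-/

open scoped RealInnerProductSpace
open Module (finrank)

def IsIrreducibleUnder {R V G : Type*} [Semiring R] [AddCommMonoid V] [Module R V]
    (ρ : G → V → V) (M : Submodule R V) : Prop :=
  ∀ N ≤ M, (∀ g, ∀ x ∈ N, ρ g x ∈ N) → N = ⊥ ∨ N = M

theorem IsIrreducibleUnder.map {R V W G : Type*} [Semiring R] [AddCommMonoid V] [Module R V]
    [AddCommMonoid W] [Module R W] {ρV : G → V → V} {ρW : G → W → W} (e : V ≃ₗ[R] W)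
    (he : ∀ g x, e (ρV g x) = ρW g (e x)) {M : Submodule R V} (hM : IsIrreducibleUnder ρV M) :
    IsIrreducibleUnder ρW (M.map (e : V →ₗ[R] W)) := by
  intro N hNM hN
  have hcomap : N.comap (e : V →ₗ[R] W) ≤ M := by
    rwa [← Submodule.map_le_map_iff_of_injective e.injective,
      Submodule.map_comap_eq_of_surjective e.surjective]
  have hinv : ∀ g, ∀ x ∈ N.comap (e : V →ₗ[R] W), ρV g x ∈ N.comap (e : V →ₗ[R] W) :=
    fun g x hx => by
      rw [Submodule.mem_comap, LinearEquiv.coe_coe, he]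
      exact hN g _ hx
  have hN_eq : N = (N.comap (e : V →ₗ[R] W)).map (e : V →ₗ[R] W) :=
    (Submodule.map_comap_eq_of_surjective e.surjective N).symm
  exact (hM _ hcomap hinv).imp (fun h => by rw [hN_eq, h, Submodule.map_bot])
    (fun h => by rw [hN_eq, h])

/-- Schur's lemma over `ℝ`: an intertwiner need not have an eigenvalue, but a symmetric one does,
and its eigenspace in `M` is invariant. -/
theorem LinearMap.IsSymmetric.exists_eq_smul_of_isIrreducibleUnder {E G : Type*}
    [NormedAddCommGroup E] [InnerProductSpace ℝ E] [FiniteDimensional ℝ E]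
    {ρ : G → E →ₗ[ℝ] E} {T : E →ₗ[ℝ] E} (hT : T.IsSymmetric) (hTρ : ∀ g x, T (ρ g x) = ρ g (T x))
    {M : Submodule ℝ E} (hTM : ∀ x ∈ M, T x ∈ M) (hMρ : ∀ g, ∀ x ∈ M, ρ g x ∈ M)
    (hM : IsIrreducibleUnder (fun g => ρ g) M) : ∃ c : ℝ, ∀ x ∈ M, T x = c • x := by
  rcases subsingleton_or_nontrivial M with _ | _
  · refine ⟨0, fun x hx => ?_⟩
    rw [show x = 0 from congrArg Subtype.val (Subsingleton.elim (⟨x, hx⟩ : M) 0), map_zero,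
      smul_zero]
  obtain ⟨c, hc⟩ : ∃ c, Module.End.HasEigenvalue (T.restrict hTM) c :=
    ⟨_, (hT.restrict_invariant hTM).hasEigenvalue_iSup_of_finiteDimensional⟩
  obtain ⟨x, hx⟩ := hc.exists_hasEigenvector
  let N := M ⊓ Module.End.eigenspace T c
  have hNρ : ∀ g, ∀ y ∈ N, ρ g y ∈ N := fun g y ⟨hyM, hyT⟩ =>
    ⟨hMρ g y hyM, by
      rw [SetLike.mem_coe, Module.End.mem_eigenspace_iff] at hyT ⊢
      rw [hTρ, hyT, map_smul]⟩
  have hxN : (x : E) ∈ N :=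
    ⟨x.2, Module.End.mem_eigenspace_iff.2 (congrArg Subtype.val hx.apply_eq_smul)⟩
  have hN : N = M := (hM N inf_le_left hNρ).resolve_left fun h => by
    have : (x : E) = 0 := by simpa [h] using hxN
    exact hx.2 (Subtype.ext this)
  exact ⟨c, fun y hy => Module.End.mem_eigenspace_iff.1 (hN.symm ▸ hy : y ∈ N).2⟩

section FrameOperator

variable {ι E : Type*} [Fintype ι] [NormedAddCommGroup E] [InnerProductSpace ℝ E]

noncomputable def frameOperator (b : ι → E) : E →ₗ[ℝ] E :=
  ∑ i, (innerₛₗ ℝ (b i)).smulRight (b i)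

theorem frameOperator_apply (b : ι → E) (x : E) :
    frameOperator b x = ∑ i, ⟪b i, x⟫ • b i := by
  simp [frameOperator]

theorem frameOperator_isSymmetric (b : ι → E) : (frameOperator b).IsSymmetric := by
  intro x y
  simp only [frameOperator_apply, sum_inner, inner_sum, real_inner_smul_right, mul_comm,
    real_inner_comm]

theorem inner_frameOperator_self (b : ι → E) (x : E) :
    ⟪frameOperator b x, x⟫ = ∑ i, ⟪b i, x⟫ ^ 2 := by
  simp only [frameOperator_apply, sum_inner, real_inner_smul_left, sq]

theorem frameOperator_mem_span (b : ι → E) (x : E) :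
    frameOperator b x ∈ Submodule.span ℝ (Set.range b) := by
  rw [frameOperator_apply]
  exact Submodule.sum_mem _ fun i _ => Submodule.smul_mem _ _ (Submodule.subset_span ⟨i, rfl⟩)

theorem frameOperator_eq_zero_of_mem_orthogonal (b : ι → E) {x : E}
    (hx : x ∈ (Submodule.span ℝ (Set.range b))ᗮ) : frameOperator b x = 0 := by
  rw [frameOperator_apply]
  refine Finset.sum_eq_zero fun i _ => ?_
  rw [Submodule.inner_right_of_mem_orthogonal (Submodule.subset_span (Set.mem_range_self i)) hx,
    zero_smul]

theorem trace_frameOperator [FiniteDimensional ℝ E] (b : ι → E) :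
    LinearMap.trace ℝ E (frameOperator b) = ∑ i, ‖b i‖ ^ 2 := by
  simp [frameOperator]

theorem frameOperator_apply_map {G : Type*} [Group G] [MulAction G ι] (ρ : G → E ≃ₗᵢ[ℝ] E)
    {b : ι → E} (hb : ∀ g i, b (g • i) = ρ g (b i)) (g : G) (x : E) :
    frameOperator b (ρ g x) = ρ g (frameOperator b x) := by
  simp only [frameOperator_apply, map_sum, map_smul]
  refine (Fintype.sum_equiv (MulAction.toPerm g) _ _ fun i => ?_).symm
  rw [MulAction.toPerm_apply, hb, LinearIsometryEquiv.inner_map_map]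

theorem frameOperator_eq_smul_starProjection [FiniteDimensional ℝ E] (b : ι → E) {c : ℝ}
    (hc : ∀ x ∈ Submodule.span ℝ (Set.range b), frameOperator b x = c • x) :
    frameOperator b = c • (Submodule.span ℝ (Set.range b)).starProjection.toLinearMap := by
  set K := Submodule.span ℝ (Set.range b)
  ext x
  have hx : x = K.starProjection x + (x - K.starProjection x) := by abel
  conv_lhs => rw [hx]
  rw [map_add, frameOperator_eq_zero_of_mem_orthogonal b (K.sub_starProjection_mem_orthogonal x),
    add_zero, hc _ (K.starProjection_apply_mem x)]
  rfl

theorem mul_finrank_span_eq_sum_norm_sq [FiniteDimensional ℝ E] (b : ι → E) {c : ℝ}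
    (hc : ∀ x ∈ Submodule.span ℝ (Set.range b), frameOperator b x = c • x) :
    c * finrank ℝ (Submodule.span ℝ (Set.range b)) = ∑ i, ‖b i‖ ^ 2 := by
  set K := Submodule.span ℝ (Set.range b)
  have hproj : LinearMap.IsProj K K.starProjection.toLinearMap :=
    ⟨K.starProjection_apply_mem, fun x hx => K.starProjection_eq_self_iff.2 hx⟩
  rw [← trace_frameOperator, frameOperator_eq_smul_starProjection b hc, map_smul, hproj.trace,
    smul_eq_mul]

end FrameOperator

section EquivariantFrame

variable {ι E G : Type*} [NormedAddCommGroup E] [InnerProductSpace ℝ E]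
  [Group G] [MulAction G ι] {ρ : G → E ≃ₗᵢ[ℝ] E} {b : ι → E}

theorem map_mem_span_range_of_equivariant (hb : ∀ g i, b (g • i) = ρ g (b i)) (g : G) {x : E}
    (hx : x ∈ Submodule.span ℝ (Set.range b)) : ρ g x ∈ Submodule.span ℝ (Set.range b) := by
  refine (Submodule.map_span_le (ρ g).toLinearEquiv.toLinearMap _ _).2 ?_ ⟨x, hx, rfl⟩
  rintro _ ⟨i, rfl⟩
  exact hb g i ▸ Submodule.subset_span (Set.mem_range_self _)

theorem exists_frameOperator_eq_smul_of_isIrreducibleUnder [Fintype ι] [FiniteDimensional ℝ E]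
    (hb : ∀ g i, b (g • i) = ρ g (b i))
    (hirr : IsIrreducibleUnder (fun g => ρ g) (Submodule.span ℝ (Set.range b))) :
    ∃ c : ℝ, (∀ x ∈ Submodule.span ℝ (Set.range b), frameOperator b x = c • x) ∧
      c * finrank ℝ (Submodule.span ℝ (Set.range b)) = ∑ i, ‖b i‖ ^ 2 := by
  obtain ⟨c, hc⟩ := (frameOperator_isSymmetric b).exists_eq_smul_of_isIrreducibleUnder
    (ρ := fun g => (ρ g).toLinearEquiv.toLinearMap) (frameOperator_apply_map ρ hb)
    (fun x _ => frameOperator_mem_span b x) (fun g _ => map_mem_span_range_of_equivariant hb g)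
    hirr
  exact ⟨c, hc, mul_finrank_span_eq_sum_norm_sq b hc⟩

end EquivariantFrame

section SymmetricGroup

variable {n ℓ : ℕ} {γ : Fin ℓ → ℕ}

instance : MulAction (Equiv.Perm (Fin n)) (OSP n ℓ γ) where
  smul := ospAct
  one_smul _ := rfl
  mul_smul _ _ _ := rfl

instance : MulAction.IsPretransitive (Equiv.Perm (Fin n)) (OSP n ℓ γ) where
  exists_smul_eq π μ := by
    have hcard (j : Fin ℓ) : Fintype.card {x // μ.1 x = j} = Fintype.card {x // π.1 x = j} := by
      rw [Fintype.card_subtype, Fintype.card_subtype, μ.2 j, π.2 j]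
    let e : Equiv.Perm (Fin n) := Equiv.ofFiberEquiv fun j => Fintype.equivOfCardEq (hcard j)
    exact ⟨e⁻¹, Subtype.ext (funext (Equiv.ofFiberEquiv_map _))⟩

theorem liftB_apply (μ : OSP n ℓ γ) (v : OSP n ℓ γ → ℝ) (σ : Equiv.Perm (Fin n)) :
    liftB μ v σ = v (σ⁻¹ • μ) := rfl

theorem rhoL_liftB (τ : Equiv.Perm (Fin n)) (μ : OSP n ℓ γ) (v : OSP n ℓ γ → ℝ) :
    rhoL τ (liftB μ v) = liftB (τ • μ) v := by
  funext σ
  simp only [rhoL, liftB_apply, mul_inv_rev, inv_inv, mul_smul]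

theorem setOf_rhoL_liftB_eq_range (π : OSP n ℓ γ) (v : OSP n ℓ γ → ℝ) :
    {f | ∃ σ : Equiv.Perm (Fin n), f = rhoL σ (liftB π v)} = Set.range fun μ => liftB μ v := by
  ext f
  simp only [rhoL_liftB, Set.mem_ofPred_eq, Set.mem_range]
  constructor
  · rintro ⟨σ, rfl⟩
    exact ⟨σ • π, rfl⟩
  · rintro ⟨μ, rfl⟩
    obtain ⟨σ, rfl⟩ := MulAction.exists_smul_eq (Equiv.Perm (Fin n)) π μ
    exact ⟨σ, rfl⟩

theorem sum_norm_toLp_liftB_sq (v : OSP n ℓ γ → ℝ) :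
    ∑ μ : OSP n ℓ γ, ‖WithLp.toLp 2 (liftB μ v)‖ ^ 2 = n ! * ∑ μ, v μ ^ 2 := by
  have hfiber (σ : Equiv.Perm (Fin n)) : ∑ μ : OSP n ℓ γ, liftB μ v σ ^ 2 = ∑ μ, v μ ^ 2 :=
    Equiv.sum_comp (MulAction.toPerm σ⁻¹) fun μ => v μ ^ 2
  simp only [EuclideanSpace.real_norm_sq_eq]
  rw [Finset.sum_comm, Finset.sum_congr rfl fun σ _ => hfiber σ, Finset.sum_const,
    Finset.card_univ, Fintype.card_perm, Fintype.card_fin, nsmul_eq_mul]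

noncomputable def regularIsometry (τ : Equiv.Perm (Fin n)) :
    EuclideanSpace ℝ (Equiv.Perm (Fin n)) ≃ₗᵢ[ℝ] EuclideanSpace ℝ (Equiv.Perm (Fin n)) :=
  LinearIsometryEquiv.piLpCongrLeft 2 ℝ ℝ (Equiv.mulLeft τ)

theorem regularIsometry_toLp (τ : Equiv.Perm (Fin n)) (f : Equiv.Perm (Fin n) → ℝ) :
    regularIsometry τ (WithLp.toLp 2 f) = WithLp.toLp 2 (rhoL τ f) := by
  ext σ
  simp [regularIsometry, rhoL, Equiv.piCongrLeft']

end SymmetricGroup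

theorem exists_frameOperator_liftB_eq_smul {n ℓ : ℕ} {γ : Fin ℓ → ℕ} (π : OSP n ℓ γ)
    (v : OSP n ℓ γ → ℝ) (M : Submodule ℝ (Equiv.Perm (Fin n) → ℝ))
    (hM : M = Submodule.span ℝ {f | ∃ σ : Equiv.Perm (Fin n), f = rhoL σ (liftB π v)})
    (hirr : IsIrreducibleUnder rhoL M) :
    ∃ c : ℝ, (∀ f ∈ M, frameOperator (fun μ => WithLp.toLp 2 (liftB μ v)) (WithLp.toLp 2 f) =
        c • WithLp.toLp 2 f) ∧ c * finrank ℝ M = n ! * ∑ μ, v μ ^ 2 := by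
  -- `ℝ^{S_n}` carries the sup norm; the paper's inner product lives on its Euclidean copy.
  let e := (WithLp.linearEquiv 2 ℝ (Equiv.Perm (Fin n) → ℝ)).symm
  have hspan : M.map (e : _ →ₗ[ℝ] _) =
      Submodule.span ℝ (Set.range fun μ => WithLp.toLp 2 (liftB μ v)) := by
    rw [hM, setOf_rhoL_liftB_eq_range, Submodule.map_span, ← Set.range_comp]
    rfl
  obtain ⟨c, hc, hcd⟩ := exists_frameOperator_eq_smul_of_isIrreducibleUnder (ρ := regularIsometry)
    (fun τ μ => by rw [regularIsometry_toLp, rhoL_liftB])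
    (hspan ▸ hirr.map e fun τ f => (regularIsometry_toLp τ f).symm)
  refine ⟨c, fun f hf => hc _ (hspan ▸ Submodule.mem_map_of_mem hf), ?_⟩
  rwa [← hspan, LinearEquiv.finrank_map_eq, sum_norm_toLp_liftB_sq] at hcd

theorem tight_parseval_frame_general {n ℓ : ℕ} (γ : Fin ℓ → ℕ)
    (π : OSP n ℓ γ) (v : OSP n ℓ γ → ℝ)
    (hv : ∑ μ : OSP n ℓ γ, v μ ^ 2 = 1)
    (M : Submodule ℝ (Equiv.Perm (Fin n) → ℝ))
    (hM : M = Submodule.span ℝ {f | ∃ σ : Equiv.Perm (Fin n), f = rhoL σ (liftB π v)})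
    (hirr : ∀ N : Submodule ℝ (Equiv.Perm (Fin n) → ℝ), N ≤ M →
      (∀ τ : Equiv.Perm (Fin n), ∀ f ∈ N, rhoL τ f ∈ N) → N = ⊥ ∨ N = M)
    (d : ℕ) (hd : d = Module.finrank ℝ M) :
    ∀ f ∈ M,
      (f = fun σ : Equiv.Perm (Fin n) =>
        ((d : ℝ) / (n ! : ℝ)) * ∑ μ : OSP n ℓ γ,
          (∑ τ : Equiv.Perm (Fin n), f τ * liftB μ v τ) * liftB μ v σ) ∧
      (∑ μ : OSP n ℓ γ,
          (∑ τ : Equiv.Perm (Fin n), f τ * (Real.sqrt ((d : ℝ) / (n ! : ℝ)) * liftB μ v τ)) ^ 2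
        = ∑ τ : Equiv.Perm (Fin n), f τ ^ 2) := by
  intro f hf
  obtain ⟨c, hc, hcd⟩ := exists_frameOperator_liftB_eq_smul π v M hM hirr
  rw [← hd, hv, mul_one] at hcd
  have hqc : (d : ℝ) / n ! * c = 1 := by
    rw [div_mul_eq_mul_div, mul_comm, hcd, div_self (by positivity)]
  have hcoef (μ : OSP n ℓ γ) :
      ∑ τ, f τ * liftB μ v τ = ⟪WithLp.toLp 2 (liftB μ v), WithLp.toLp 2 f⟫ := by
    simp [PiLp.inner_apply]
  have hTf := hc f hf
  constructor
  · funext σ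
    have hσ := congrArg (fun x => x σ) hTf
    simp only [frameOperator_apply, WithLp.ofLp_sum, WithLp.ofLp_smul, Finset.sum_apply,
      Pi.smul_apply, smul_eq_mul] at hσ
    simp_rw [hcoef, hσ, ← mul_assoc, hqc, one_mul]
  · have hsqrt : Real.sqrt ((d : ℝ) / n !) ^ 2 = d / n ! := Real.sq_sqrt (by positivity)
    calc ∑ μ : OSP n ℓ γ,
          (∑ τ : Equiv.Perm (Fin n), f τ * (Real.sqrt ((d : ℝ) / n !) * liftB μ v τ)) ^ 2
        = d / n ! * ∑ μ, ⟪WithLp.toLp 2 (liftB μ v), WithLp.toLp 2 f⟫ ^ 2 := by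
          simp_rw [Finset.mul_sum, mul_left_comm (f _), ← Finset.mul_sum, mul_pow, hsqrt, hcoef]
          rw [Finset.mul_sum]
      _ = ∑ τ, f τ ^ 2 := by
          rw [← inner_frameOperator_self, hTf, real_inner_smul_left, ← mul_assoc, hqc, one_mul,
            real_inner_self_eq_norm_sq, EuclideanSpace.real_norm_sq_eq]

/-- core of Theorem 1 of the paper: if `v : Π_γ → ℝ` is a unit vector,
`M` is the (irreducible) left `S_n`-module generated by `B_π v`, and `d = dim M`, then the
family `{√(d/n!)·B_μ v : μ ∈ Π_γ}` is a tight Parseval frame for `M`: every `f ∈ M` is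
reconstructed as `f = (d/n!)·∑_μ ⟨f, B_μ v⟩·B_μ v`, and
`∑_μ |⟨f, √(d/n!)·B_μ v⟩|² = ‖f‖²`. -/
theorem tight_parseval_frame {n ℓ : ℕ} (hn : 1 ≤ n) (γ : Fin ℓ → ℕ)
    (hsum : ∑ j, γ j = n) (π : OSP n ℓ γ) (v : OSP n ℓ γ → ℝ)
    (hv : ∑ μ : OSP n ℓ γ, v μ ^ 2 = 1)
    (M : Submodule ℝ (Equiv.Perm (Fin n) → ℝ))
    (hM : M = Submodule.span ℝ {f | ∃ σ : Equiv.Perm (Fin n), f = rhoL σ (liftB π v)})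
    (hMbot : M ≠ ⊥)
    (hirr : ∀ N : Submodule ℝ (Equiv.Perm (Fin n) → ℝ), N ≤ M →
      (∀ τ : Equiv.Perm (Fin n), ∀ f ∈ N, rhoL τ f ∈ N) → N = ⊥ ∨ N = M)
    (d : ℕ) (hd : d = Module.finrank ℝ M) :
    ∀ f ∈ M,
      (f = fun σ : Equiv.Perm (Fin n) =>
        ((d : ℝ) / (n ! : ℝ)) * ∑ μ : OSP n ℓ γ,
          (∑ τ : Equiv.Perm (Fin n), f τ * liftB μ v τ) * liftB μ v σ) ∧
      (∑ μ : OSP n ℓ γ,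
          (∑ τ : Equiv.Perm (Fin n), f τ * (Real.sqrt ((d : ℝ) / (n ! : ℝ)) * liftB μ v τ)) ^ 2
        = ∑ τ : Equiv.Perm (Fin n), f τ ^ 2) :=
  tight_parseval_frame_general γ π v hv M hM hirr d hd
end

section
/- Let γ be a partition of n (γ_1 ≥ … ≥ γ_ℓ) and π ∈ Π_γ. If v, v' ∈ V_γ* (the Specht submodule of ℝ^{Π_γ}) are orthogonal, then the left S_n-submodules span{ρ_L(σ)(B_π v) : σ ∈ S_n} and span{ρ_L(σ)(B_π v') : σ ∈ S_n} of ℝ^{S_n} are orthogonal subspaces. -/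
open Finset

/-- The (0-indexed) column of `x` in the ordered set partition `μ`: `x` lies in column `c`
iff `x` is the `(c+1)`-st smallest element of its block, i.e. exactly `c` elements of the
block of `x` are smaller than `x`. -/
def colOf {n ℓ : ℕ} {γ : Fin ℓ → ℕ} (μ : OSP n ℓ γ) (x : Fin n) : ℕ :=
  (Finset.univ.filter fun y => μ.1 y = μ.1 x ∧ y < x).card

/-- The column group `C_μ`: permutations preserving each column of `μ` setwise. -/
def colGroup {n ℓ : ℕ} {γ : Fin ℓ → ℕ} (μ : OSP n ℓ γ) : Finset (Equiv.Perm (Fin n)) :=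
  Finset.univ.filter fun β => ∀ x : Fin n, colOf μ (β x) = colOf μ x

/-- The polytabloid `q_μ = ∑_{β ∈ C_μ} sign(β)·e_{β⁻¹·μ} ∈ ℝ^{Π_γ}`. -/
def polytabloid {n ℓ : ℕ} {γ : Fin ℓ → ℕ} (μ : OSP n ℓ γ) : OSP n ℓ γ → ℝ :=
  fun ρ => ∑ β ∈ colGroup μ,
    if ospAct β⁻¹ μ = ρ then ((Equiv.Perm.sign β : ℤ) : ℝ) else 0

/-- The Specht submodule `V_γ* ⊆ ℝ^{Π_γ}`: the span of the polytabloids. -/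
def Specht (n ℓ : ℕ) (γ : Fin ℓ → ℕ) : Submodule ℝ (OSP n ℓ γ → ℝ) :=
  Submodule.span ℝ (Set.range (polytabloid (n := n) (ℓ := ℓ) (γ := γ)))

/-! For `a b : ℝ^{Π_γ}` consider the `S_n`-invariant matrix
`M_{a,b}(μ, μ') = ∑_α a(α⁻¹μ) b(α⁻¹μ')`; the inner product of `ρ_L(σ) B_π a` and `ρ_L(σ') B_π b`
is its entry at `(σπ, σ'π)`, so it suffices to show `M := M_{v,v'} = 0`.

By James's lemma the column antisymmetrizer `κ_μ` maps all of `ℝ^{Π_γ}` into `ℝ q_μ`. An invariant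
matrix `N` commutes with every `κ_μ`, so `N q_μ = κ_μ (N e_μ) ∈ ℝ q_μ`; moving `μ` by a permutation
that respects rows and columns shows the scalar does not depend on `μ`, so `N` acts on `V_γ*` as a
scalar `c`. Applied to `Mᵀ = M_{v',v}` and the columns of `M` (combinations of translates of `v`)
this gives `MᵀM = c M`, hence `tr(MᵀM) = c |S_n| ⟨v, v'⟩ = 0` and `M = 0`. -/

open Matrix

section GroupAction

variable {G X : Type*} [Group G] [MulAction G X]

def funAct (g : G) : (X → ℝ) →ₗ[ℝ] (X → ℝ) :=
  LinearMap.funLeft ℝ ℝ (g⁻¹ • ·)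

@[simp]
lemma funAct_apply (g : G) (u : X → ℝ) (x : X) : funAct g u x = u (g⁻¹ • x) := rfl

lemma funAct_mul (g h : G) (u : X → ℝ) :
    funAct g (funAct h u) = funAct (g * h) u := by
  ext x
  simp [mul_smul]

lemma funAct_single [DecidableEq X] (g : G) (x : X) :
    funAct g (Pi.single x 1) = Pi.single (g • x) 1 := by
  ext y
  simp only [funAct_apply, Pi.single_apply, inv_smul_eq_iff]

lemma dotProduct_funAct [Fintype X] (g : G) (a b : X → ℝ) :
    funAct g a ⬝ᵥ funAct g b = a ⬝ᵥ b :=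
  Fintype.sum_equiv (MulAction.toPerm g⁻¹) _ _ fun _ => rfl

variable (G) in
def IsInvariantMatrix (N : Matrix X X ℝ) : Prop :=
  ∀ (g : G) x y, N (g • x) (g • y) = N x y

lemma IsInvariantMatrix.mulVec_funAct [Fintype X] {N : Matrix X X ℝ}
    (hN : IsInvariantMatrix G N) (g : G) (u : X → ℝ) :
    N *ᵥ funAct g u = funAct g (N *ᵥ u) := by
  ext x
  refine Fintype.sum_equiv (MulAction.toPerm g⁻¹) _ _ fun y => ?_
  simp [← hN g⁻¹ x]

variable [Fintype G]

variable (G) in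
def orbitGram (a b : X → ℝ) : Matrix X X ℝ :=
  ∑ g : G, vecMulVec (funAct g a) (funAct g b)

lemma orbitGram_apply (a b : X → ℝ) (x y : X) :
    orbitGram G a b x y = ∑ g : G, a (g⁻¹ • x) * b (g⁻¹ • y) := by
  simp [orbitGram, Matrix.sum_apply, vecMulVec_apply]

lemma isInvariantMatrix_orbitGram (a b : X → ℝ) : IsInvariantMatrix G (orbitGram G a b) := by
  intro h x y
  simp only [orbitGram_apply]
  refine Fintype.sum_equiv (Equiv.mulLeft h⁻¹) _ _ fun g => ?_
  simp [mul_smul]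

lemma transpose_orbitGram (a b : X → ℝ) :
    (orbitGram G a b)ᵀ = orbitGram G b a := by
  simp [orbitGram, transpose_sum, transpose_vecMulVec]

lemma trace_orbitGram [Fintype X] (a b : X → ℝ) :
    trace (orbitGram G a b) = Fintype.card G • (a ⬝ᵥ b) := by
  simp [orbitGram, trace_sum, dotProduct_funAct]

theorem orbitGram_eq_zero [Fintype X] {a b : X → ℝ} {c : ℝ} (hab : a ⬝ᵥ b = 0)
    (hc : orbitGram G b a *ᵥ a = c • a) : orbitGram G a b = 0 := by
  have hcol (g : G) : orbitGram G b a *ᵥ funAct g a = c • funAct g a := by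
    rw [(isInvariantMatrix_orbitGram b a).mulVec_funAct, hc, map_smul]
  have hsq : (orbitGram G a b)ᵀ * orbitGram G a b = c • orbitGram G a b := by
    rw [transpose_orbitGram, orbitGram.eq_1 G a b, Finset.mul_sum, Finset.smul_sum]
    exact Finset.sum_congr rfl fun g _ => by rw [mul_vecMulVec, hcol, smul_vecMulVec]
  refine trace_conjTranspose_mul_self_eq_zero_iff.1 ?_
  rw [conjTranspose_eq_transpose_of_trivial, hsq, trace_smul, trace_orbitGram, hab, smul_zero,
    smul_zero]

end GroupAction

lemma dotProduct_eq_zero_of_mem_span {ι R : Type*} [Fintype ι] [CommSemiring R]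
    {s t : Set (ι → R)} (h : ∀ a ∈ s, ∀ b ∈ t, a ⬝ᵥ b = 0) {a b : ι → R}
    (ha : a ∈ Submodule.span R s) (hb : b ∈ Submodule.span R t) : a ⬝ᵥ b = 0 := by
  induction ha, hb using Submodule.span_induction₂ with
  | mem_mem a b ha hb => exact h a ha b hb
  | zero_left | zero_right => simp
  | add_left | add_right => simp_all [add_dotProduct, dotProduct_add]
  | smul_left | smul_right => simp_all [smul_dotProduct, dotProduct_smul]

section Tableaux

variable {n ℓ : ℕ} {γ : Fin ℓ → ℕ}

instance inst_s9 : MulAction (Equiv.Perm (Fin n)) (OSP n ℓ γ) where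
  smul := ospAct
  one_smul _ := rfl
  mul_smul _ _ _ := rfl

namespace OSP

@[simp]
lemma ospAct_eq_smul (σ : Equiv.Perm (Fin n)) (μ : OSP n ℓ γ) : ospAct σ μ = σ • μ := rfl

@[simp]
lemma smul_apply (σ : Equiv.Perm (Fin n)) (μ : OSP n ℓ γ) (x : Fin n) :
    (σ • μ).1 x = μ.1 (σ⁻¹ x) := rfl

end OSP

lemma colOf_lt_colOf (μ : OSP n ℓ γ) {x y : Fin n} (hb : μ.1 x = μ.1 y) (hxy : x < y) :
    colOf μ x < colOf μ y := by
  refine Finset.card_lt_card ⟨fun z hz => ?_, fun h => ?_⟩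
  · simp only [Finset.mem_filter, Finset.mem_univ, true_and] at hz ⊢
    exact ⟨hz.1.trans hb, hz.2.trans hxy⟩
  · simpa [hb, hxy] using h (x := x)

lemma injective_block_colOf (μ : OSP n ℓ γ) :
    Function.Injective fun x => (μ.1 x, colOf μ x) := by
  intro x y hxy
  obtain ⟨hb, hc⟩ := Prod.ext_iff.1 hxy
  rcases lt_trichotomy x y with hlt | rfl | hlt
  · exact absurd hc (colOf_lt_colOf μ hb hlt).ne
  · rfl
  · exact absurd hc (colOf_lt_colOf μ hb.symm hlt).ne'

lemma colOf_lt (μ : OSP n ℓ γ) (x : Fin n) : colOf μ x < γ (μ.1 x) := by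
  rw [← μ.2 (μ.1 x)]
  refine Finset.card_lt_card ⟨fun z hz => ?_, fun h => ?_⟩
  · simp only [Finset.mem_filter, Finset.mem_univ, true_and] at hz ⊢
    exact hz.1
  · simpa using h (x := x)

lemma image_colOf_block (μ : OSP n ℓ γ) (j : Fin ℓ) :
    ({x | μ.1 x = j} : Finset (Fin n)).image (colOf μ) = Finset.range (γ j) := by
  refine Finset.eq_of_subset_of_card_le (fun c hc => ?_) ?_
  · obtain ⟨x, hx, rfl⟩ := Finset.mem_image.1 hc
    simp only [Finset.mem_filter, Finset.mem_univ, true_and] at hx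
    exact Finset.mem_range.2 (hx ▸ colOf_lt μ x)
  · rw [Finset.card_range, Finset.card_image_of_injOn, μ.2 j]
    intro x hx y hy
    simp only [Finset.coe_filter, Finset.mem_univ, true_and, Set.mem_ofPred_eq] at hx hy
    exact fun hxy => injective_block_colOf μ (Prod.ext (hx.trans hy.symm) hxy)

lemma exists_colOf_eq (μ : OSP n ℓ γ) {j : Fin ℓ} {c : ℕ} (hc : c < γ j) :
    ∃ x, μ.1 x = j ∧ colOf μ x = c := by
  rw [← Finset.mem_range, ← image_colOf_block μ j] at hc
  simpa using hc

lemma card_filter_block_colOf_lt (μ : OSP n ℓ γ) (j : Fin ℓ) (c : ℕ) :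
    #{x | μ.1 x = j ∧ colOf μ x < c} = min (γ j) c := by
  have hrange : (Finset.range (γ j)).filter (· < c) = Finset.range (min (γ j) c) := by
    ext; simp
  rw [← Finset.card_range (min (γ j) c), ← hrange, ← image_colOf_block, Finset.filter_image,
    Finset.card_image_of_injOn, Finset.filter_filter]
  intro x hx y hy
  simp only [Finset.coe_filter, Finset.mem_filter, Finset.mem_univ, true_and,
    Set.mem_ofPred_eq] at hx hy
  exact fun hxy => injective_block_colOf μ (Prod.ext (hx.1.trans hy.1.symm) hxy)

lemma sum_card_filter_block (ν : OSP n ℓ γ) (p : Fin n → Prop) [DecidablePred p] :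
    ∑ j, #{x | ν.1 x = j ∧ p x} = #{x | p x} := by
  rw [Finset.card_eq_sum_card_fiberwise (f := ν.1) (t := Finset.univ) (by simp)]
  simp only [Finset.filter_filter, and_comm]

lemma colOf_lt_of_injective {μ ν : OSP n ℓ γ}
    (h : Function.Injective fun x => (ν.1 x, colOf μ x)) (x : Fin n) :
    colOf μ x < γ (ν.1 x) := by
  have hle : ∀ j c, #{z | ν.1 z = j ∧ colOf μ z < c} ≤ min (γ j) c := by
    intro j c
    refine le_min ((Finset.card_le_card fun z hz => ?_).trans (ν.2 j).le) ?_
    · simp only [Finset.mem_filter, Finset.mem_univ, true_and] at hz ⊢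
      exact hz.1
    · refine (Finset.card_le_card_of_injOn (colOf μ) (fun z hz => ?_)
        fun a ha b hb hab => ?_).trans_eq (Finset.card_range c)
      · simp only [Finset.coe_filter, Finset.mem_univ, true_and, Set.mem_ofPred_eq] at hz
        exact Finset.mem_range.2 hz.2
      · simp only [Finset.coe_filter, Finset.mem_univ, true_and, Set.mem_ofPred_eq] at ha hb
        exact h (Prod.ext (ha.1.trans hb.1.symm) hab)
  -- both sides count the elements of `μ`-column `< c`, sorted by `ν`-block and by `μ`-block
  have hsum : ∀ c, ∑ j, #{z | ν.1 z = j ∧ colOf μ z < c} = ∑ j, min (γ j) c := fun c => by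
    simp only [sum_card_filter_block, ← card_filter_block_colOf_lt μ]
  have heq := (Finset.sum_eq_sum_iff_of_le fun j _ => hle j (γ (ν.1 x))).1 (hsum _) (ν.1 x)
    (Finset.mem_univ _)
  have hcard : #{z | ν.1 z = ν.1 x ∧ colOf μ z < γ (ν.1 x)} = #{z | ν.1 z = ν.1 x} := by
    rw [heq, min_self, ν.2]
  have hx : x ∈ ({z | ν.1 z = ν.1 x} : Finset (Fin n)) := by simp
  rw [← Finset.eq_of_subset_of_card_le (fun z hz => by simp_all) hcard.ge] at hx
  simpa using hx

lemma exists_perm_block_colOf (μ : OSP n ℓ γ) {p : Fin n → Fin ℓ × ℕ}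
    (hp : Function.Injective p) (hlt : ∀ x, (p x).2 < γ (p x).1) :
    ∃ θ : Equiv.Perm (Fin n), ∀ x, μ.1 (θ x) = (p x).1 ∧ colOf μ (θ x) = (p x).2 := by
  choose f hf using fun x => exists_colOf_eq μ (hlt x)
  have hinj : Function.Injective f := fun x y hxy =>
    hp (Prod.ext ((hf x).1.symm.trans (hxy ▸ (hf y).1)) ((hf x).2.symm.trans (hxy ▸ (hf y).2)))
  exact ⟨Equiv.ofBijective f (Finite.injective_iff_bijective.1 hinj), hf⟩

lemma mem_colGroup {μ : OSP n ℓ γ} {β : Equiv.Perm (Fin n)} :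
    β ∈ colGroup μ ↔ ∀ x, colOf μ (β x) = colOf μ x := by
  simp [colGroup]

lemma mul_mem_colGroup {μ : OSP n ℓ γ} {α β : Equiv.Perm (Fin n)}
    (hα : α ∈ colGroup μ) (hβ : β ∈ colGroup μ) : α * β ∈ colGroup μ :=
  mem_colGroup.2 fun x => (mem_colGroup.1 hα _).trans (mem_colGroup.1 hβ x)

lemma inv_mem_colGroup {μ : OSP n ℓ γ} {β : Equiv.Perm (Fin n)} (hβ : β ∈ colGroup μ) :
    β⁻¹ ∈ colGroup μ :=
  mem_colGroup.2 fun x => by simpa using (mem_colGroup.1 hβ (β⁻¹ x)).symm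

lemma exists_mem_colGroup_inv_smul_eq {μ ν : OSP n ℓ γ}
    (h : Function.Injective fun x => (ν.1 x, colOf μ x)) :
    ∃ β ∈ colGroup μ, β⁻¹ • μ = ν := by
  obtain ⟨β, hβ⟩ := exists_perm_block_colOf μ h (colOf_lt_of_injective h)
  exact ⟨β, mem_colGroup.2 fun x => (hβ x).2,
    Subtype.ext (funext fun x => by simpa using (hβ x).1)⟩

lemma exists_funAct_polytabloid_eq (μ ν : OSP n ℓ γ) :
    ∃ θ : Equiv.Perm (Fin n), funAct θ (polytabloid μ) = polytabloid ν := by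
  obtain ⟨θ, hθ⟩ := exists_perm_block_colOf ν (injective_block_colOf μ) (colOf_lt μ)
  have hν : θ • μ = ν := Subtype.ext (funext fun x => by simpa using ((hθ (θ⁻¹ x)).1).symm)
  have hconj : ∀ β, β ∈ colGroup μ ↔ MulAut.conj θ β ∈ colGroup ν := by
    intro β
    simp only [mem_colGroup, MulAut.conj_apply, Equiv.Perm.mul_apply]
    have hcol : ∀ y, colOf ν y = colOf μ (θ⁻¹ y) := fun y => by simpa using (hθ (θ⁻¹ y)).2
    exact ⟨fun h x => by simp [hcol, h], fun h x => by simpa [hcol] using h (θ x)⟩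
  refine ⟨θ, funext fun ρ => Finset.sum_equiv (MulAut.conj θ).toEquiv hconj fun β _ => ?_⟩
  have hsign : Equiv.Perm.sign (MulAut.conj θ β) = Equiv.Perm.sign β := by
    rw [MulAut.conj_apply, map_mul, map_mul, map_inv, mul_inv_cancel_comm]
  simp only [MulEquiv.toEquiv_eq_coe, EquivLike.coe_coe, hsign]
  simp [← hν, mul_smul, smul_eq_iff_eq_inv_smul]

def colAntisym (μ : OSP n ℓ γ) : Module.End ℝ (OSP n ℓ γ → ℝ) :=
  ∑ β ∈ colGroup μ, ((Equiv.Perm.sign β : ℤ) : ℝ) • funAct β⁻¹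

lemma colAntisym_apply (μ : OSP n ℓ γ) (u : OSP n ℓ γ → ℝ) :
    colAntisym μ u = ∑ β ∈ colGroup μ, ((Equiv.Perm.sign β : ℤ) : ℝ) • funAct β⁻¹ u := by
  simp [colAntisym]

lemma colAntisym_single_self (μ : OSP n ℓ γ) : colAntisym μ (Pi.single μ 1) = polytabloid μ := by
  ext ρ
  simp [colAntisym_apply, polytabloid, funAct_single, Finset.sum_apply, Pi.single_apply, eq_comm]

lemma colAntisym_funAct {μ : OSP n ℓ γ} {β₀ : Equiv.Perm (Fin n)} (hβ₀ : β₀ ∈ colGroup μ)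
    (u : OSP n ℓ γ → ℝ) :
    colAntisym μ (funAct β₀ u) = ((Equiv.Perm.sign β₀ : ℤ) : ℝ) • colAntisym μ u := by
  simp only [colAntisym_apply, funAct_mul, Finset.smul_sum, smul_smul]
  refine Finset.sum_nbij' (β₀⁻¹ * ·) (β₀ * ·)
    (fun β hβ => mul_mem_colGroup (inv_mem_colGroup hβ₀) hβ) (fun β hβ => mul_mem_colGroup hβ₀ hβ)
    (by simp) (by simp) fun β _ => ?_
  have hsq : ((Equiv.Perm.sign β₀ : ℤ) : ℝ) * (Equiv.Perm.sign β₀ : ℤ) = 1 := by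
    rw [← Int.cast_mul, ← Units.val_mul, Int.units_mul_self, Units.val_one, Int.cast_one]
  simp [← mul_assoc, hsq]

lemma colAntisym_single_mem_span (μ ν : OSP n ℓ γ) :
    colAntisym μ (Pi.single ν 1) ∈ ℝ ∙ polytabloid μ := by
  by_cases h : Function.Injective fun x => (ν.1 x, colOf μ x)
  · obtain ⟨β, hβ, rfl⟩ := exists_mem_colGroup_inv_smul_eq h
    rw [← funAct_single, colAntisym_funAct (inv_mem_colGroup hβ), colAntisym_single_self]
    exact Submodule.smul_mem _ _ (Submodule.mem_span_singleton_self _)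
  · -- a transposition of two entries of a `ν`-block lying in one `μ`-column fixes `ν` and is odd
    obtain ⟨x, y, hb, hc, hne⟩ : ∃ x y, ν.1 x = ν.1 y ∧ colOf μ x = colOf μ y ∧ x ≠ y := by
      simpa [Function.Injective] using h
    have hswap : Equiv.swap x y ∈ colGroup μ := mem_colGroup.2 (Equiv.apply_swap_eq_self hc)
    have hfix : Equiv.swap x y • ν = ν :=
      Subtype.ext (funext fun z => by simpa using Equiv.apply_swap_eq_self hb z)
    have hneg := colAntisym_funAct hswap (Pi.single ν 1)
    rw [funAct_single, hfix, Equiv.Perm.sign_swap hne] at hneg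
    have hzero : colAntisym μ (Pi.single ν 1) = 0 := self_eq_neg.mp (by simpa using hneg)
    simp [hzero]

lemma colAntisym_mem_span (μ : OSP n ℓ γ) (u : OSP n ℓ γ → ℝ) :
    colAntisym μ u ∈ ℝ ∙ polytabloid μ := by
  rw [pi_eq_sum_univ' u, map_sum]
  exact Submodule.sum_mem _ fun ν _ => by
    rw [map_smul]
    exact Submodule.smul_mem _ _ (colAntisym_single_mem_span μ ν)

lemma IsInvariantMatrix.mulVec_colAntisym {N : Matrix (OSP n ℓ γ) (OSP n ℓ γ) ℝ}
    (hN : IsInvariantMatrix (Equiv.Perm (Fin n)) N) (μ : OSP n ℓ γ) (u : OSP n ℓ γ → ℝ) :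
    N *ᵥ colAntisym μ u = colAntisym μ (N *ᵥ u) := by
  simp [colAntisym_apply, Matrix.mulVec_sum, Matrix.mulVec_smul, hN.mulVec_funAct]

theorem IsInvariantMatrix.exists_specht_le_eigenspace {N : Matrix (OSP n ℓ γ) (OSP n ℓ γ) ℝ}
    (hN : IsInvariantMatrix (Equiv.Perm (Fin n)) N) :
    ∃ c : ℝ, Specht n ℓ γ ≤ Module.End.eigenspace (Matrix.toLin' N) c := by
  rcases isEmpty_or_nonempty (OSP n ℓ γ) with _ | ⟨⟨π⟩⟩
  · exact ⟨0, fun w _ => by simp [Subsingleton.elim w 0]⟩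
  obtain ⟨c, hc⟩ := Submodule.mem_span_singleton.1 <| hN.mulVec_colAntisym π (Pi.single π 1) ▸
    colAntisym_mem_span π (N *ᵥ Pi.single π 1)
  rw [colAntisym_single_self] at hc
  refine ⟨c, Submodule.span_le.2 <| Set.range_subset_iff.2 fun μ => ?_⟩
  obtain ⟨θ, hθ⟩ := exists_funAct_polytabloid_eq π μ
  simp [← hθ, hN.mulVec_funAct, ← hc]

end Tableaux

lemma dotProduct_rhoL_liftB {n ℓ : ℕ} {γ : Fin ℓ → ℕ} (π : OSP n ℓ γ) (a b : OSP n ℓ γ → ℝ)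
    (σ σ' : Equiv.Perm (Fin n)) :
    rhoL σ (liftB π a) ⬝ᵥ rhoL σ' (liftB π b) =
      orbitGram (Equiv.Perm (Fin n)) a b (σ • π) (σ' • π) := by
  simp [orbitGram_apply, dotProduct, rhoL, liftB, mul_smul]

theorem orthogonal_generated_modules_general {n ℓ : ℕ} (γ : Fin ℓ → ℕ)
    (π : OSP n ℓ γ)
    (v v' : OSP n ℓ γ → ℝ) (hv : v ∈ Specht n ℓ γ)
    (horth : ∑ μ : OSP n ℓ γ, v μ * v' μ = 0) :
    ∀ f ∈ Submodule.span ℝ {f | ∃ σ : Equiv.Perm (Fin n), f = rhoL σ (liftB π v)},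
    ∀ g ∈ Submodule.span ℝ {g | ∃ σ : Equiv.Perm (Fin n), g = rhoL σ (liftB π v')},
      ∑ τ : Equiv.Perm (Fin n), f τ * g τ = 0 := by
  obtain ⟨c, hc⟩ :=
    (isInvariantMatrix_orbitGram (G := Equiv.Perm (Fin n)) v' v).exists_specht_le_eigenspace
  have hgram : orbitGram (Equiv.Perm (Fin n)) v v' = 0 :=
    orbitGram_eq_zero horth (Module.End.mem_eigenspace_iff.1 (hc hv))
  intro f hf g hg
  refine dotProduct_eq_zero_of_mem_span ?_ hf hg
  rintro _ ⟨σ, rfl⟩ _ ⟨σ', rfl⟩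
  rw [dotProduct_rhoL_liftB, hgram, Matrix.zero_apply]

/-- if `v, v'` are orthogonal vectors of the Specht submodule
`V_γ* ⊆ ℝ^{Π_γ}` (for a partition `γ` of `n`), then the left `S_n`-submodules of
`ℝ^{S_n}` generated by `B_π v` and by `B_π v'` are orthogonal subspaces. -/
theorem orthogonal_generated_modules {n ℓ : ℕ} (hn : 1 ≤ n) (γ : Fin ℓ → ℕ)
    (hpart : Antitone γ) (hsum : ∑ j, γ j = n) (π : OSP n ℓ γ)
    (v v' : OSP n ℓ γ → ℝ) (hv : v ∈ Specht n ℓ γ) (hv' : v' ∈ Specht n ℓ γ)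
    (horth : ∑ μ : OSP n ℓ γ, v μ * v' μ = 0) :
    ∀ f ∈ Submodule.span ℝ {f | ∃ σ : Equiv.Perm (Fin n), f = rhoL σ (liftB π v)},
    ∀ g ∈ Submodule.span ℝ {g | ∃ σ : Equiv.Perm (Fin n), g = rhoL σ (liftB π v')},
      ∑ τ : Equiv.Perm (Fin n), f τ * g τ = 0 :=
  orthogonal_generated_modules_general γ π v v' hv horth
end

section
/- (Recursive block structure of the reading-order characteristic matrix.) Let γ = [γ_1,…,γ_ℓ] be a composition of n ≥ 2, and let π_1 ∈ Π_γ be the reading-order set partition, defined by π_1(x) = j iff γ_1+⋯+γ_{j−1} < x ≤ γ_1+⋯+γ_j. For σ ∈ S_n and μ ∈ Π_γ, put a := σ(n) and j := μ(n). Then the (σ,μ) entry of B_{π_1} is 0 unless π_1(a) = j; and when π_1(a) = j, it equals the (σ',μ') entry of B_{π_1'}, where γ(j) is the composition of n−1 obtained from γ by decreasing γ_j by 1, π_1' ∈ Π_{γ(j)} is the reading-order set partition of shape γ(j), σ' ∈ S_{n−1} is defined by σ'(x) = σ(x) if σ(x) < a and σ'(x) = σ(x)−1 if σ(x) > a, and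 μ' ∈ Π_{γ(j)} is the restriction of μ to {1,…,n−1}. -/
open Finset

lemma ospAct_eq_iff_s13 {m ℓ : ℕ} {γ : Fin ℓ → ℕ} (τ : Equiv.Perm (Fin m))
    (ν ρ : OSP m ℓ γ) : ospAct τ ν = ρ ↔ ∀ x, ν.1 x = ρ.1 (τ x) := by
  constructor
  · intro h x
    have h2 := congrFun (congrArg Subtype.val h) (τ x)
    simpa [ospAct] using h2
  · intro h
    apply Subtype.ext; funext x
    show ν.1 (τ.symm x) = ρ.1 x
    rw [h (τ.symm x), Equiv.apply_symm_apply]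

/-- Prop. 5 of the paper, recursive block structure of the
reading-order characteristic matrix: for the reading-order set partition `π₁` of shape
`γ`, with `a := σ(n)` and `j := μ(n)`, the `(σ,μ)` entry of `B_{π₁}` vanishes unless
`π₁(a) = j`, in which case it equals the `(σ',μ')` entry of `B_{π₁'}`, where `π₁'` is the
reading-order set partition of the shape `γ(j)` of `n-1` obtained by decreasing `γ_j` by
one, `σ' ∈ S_{n-1}` is `σ` with the value `a` deleted, and `μ'` is the restriction of `μ`. -/
theorem charM_readingOrder_recursion {n ℓ : ℕ} (hn : 2 ≤ n) (γ : Fin ℓ → ℕ)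
    (hsum : ∑ j, γ j = n)
    (π₁ : OSP n ℓ γ)
    (hπ₁ : ∀ (x : Fin n) (j : Fin ℓ), π₁.1 x = j ↔
      (∑ k ∈ Finset.univ.filter fun k => k < j, γ k) ≤ x.val ∧
        x.val < ∑ k ∈ Finset.univ.filter fun k => k ≤ j, γ k)
    (σ : Equiv.Perm (Fin n)) (μ : OSP n ℓ γ)
    (a : Fin n) (ha : a = σ ⟨n - 1, by omega⟩)
    (j : Fin ℓ) (hj : j = μ.1 ⟨n - 1, by omega⟩)
    (γ' : Fin ℓ → ℕ) (hγ' : γ' = Function.update γ j (γ j - 1))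
    (π₁' : OSP (n - 1) ℓ γ')
    (hπ₁' : ∀ (x : Fin (n - 1)) (k : Fin ℓ), π₁'.1 x = k ↔
      (∑ m ∈ Finset.univ.filter fun m => m < k, γ' m) ≤ x.val ∧
        x.val < ∑ m ∈ Finset.univ.filter fun m => m ≤ k, γ' m)
    (σ' : Equiv.Perm (Fin (n - 1)))
    (hσ' : ∀ x : Fin (n - 1),
      (σ' x : ℕ) =
        if (σ (Fin.castLE (Nat.sub_le n 1) x) : ℕ) < (a : ℕ) then
          (σ (Fin.castLE (Nat.sub_le n 1) x) : ℕ)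
        else (σ (Fin.castLE (Nat.sub_le n 1) x) : ℕ) - 1)
    (μ' : OSP (n - 1) ℓ γ')
    (hμ' : ∀ x : Fin (n - 1), μ'.1 x = μ.1 (Fin.castLE (Nat.sub_le n 1) x)) :
    charM π₁ σ μ = if π₁.1 a = j then charM π₁' σ' μ' else 0 := by
  subst hγ'
  have hn1 : n - 1 < n := by omega
  have hsplit : ∀ k : Fin ℓ, (∑ m ∈ Finset.univ.filter fun m => m ≤ k, γ m)
      = (∑ m ∈ Finset.univ.filter fun m => m < k, γ m) + γ k := by
    intro k
    have hins : (Finset.univ.filter fun m => m ≤ k)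
        = insert k (Finset.univ.filter fun m => m < k) := by
      ext m
      simp only [Finset.mem_filter, Finset.mem_univ, true_and, Finset.mem_insert]
      constructor
      · intro h; rcases lt_or_eq_of_le h with h | h
        · exact Or.inr h
        · exact Or.inl h
      · rintro (h | h)
        · exact h.le
        · exact h.le
    rw [hins, Finset.sum_insert (by simp)]
    ring
  have hmono : ∀ k k' : Fin ℓ, k < k' →
      (∑ m ∈ Finset.univ.filter fun m => m ≤ k, γ m)
        ≤ ∑ m ∈ Finset.univ.filter fun m => m < k', γ m := by
    intro k k' h
    apply Finset.sum_le_sum_of_subset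
    intro m hm
    simp only [Finset.mem_filter, Finset.mem_univ, true_and] at hm ⊢
    exact lt_of_le_of_lt hm h
  by_cases hja : π₁.1 a = j
  · -- main branch
    have hγj : 1 ≤ γ j := by
      obtain ⟨ha1, ha2⟩ := (hπ₁ a j).1 hja
      have := hsplit j
      omega
    have hupd : ∀ (s : Finset (Fin ℓ)),
        (∑ m ∈ s, Function.update γ j (γ j - 1) m)
          = (∑ m ∈ s, γ m) - (if j ∈ s then 1 else 0) := by
      intro s
      by_cases hjs : j ∈ s
      · rw [if_pos hjs, ← Finset.add_sum_erase _ _ hjs, ← Finset.add_sum_erase s γ hjs]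
        rw [Finset.sum_congr rfl
          (fun m hm => Function.update_of_ne (Finset.ne_of_mem_erase hm) _ _),
          Function.update_self]
        omega
      · rw [if_neg hjs]
        exact Finset.sum_congr rfl fun m hm =>
          Function.update_of_ne (by rintro rfl; exact hjs hm) _ _
    have hB : ∀ (y : Fin (n - 1)) (x : Fin n),
        (x : ℕ) = (if (y : ℕ) < (a : ℕ) then (y : ℕ) else (y : ℕ) + 1) →
        π₁'.1 y = π₁.1 x := by
      intro y x hx
      obtain ⟨ha1, ha2⟩ := (hπ₁ a j).1 hja
      obtain ⟨hx1, hx2⟩ := (hπ₁ x (π₁.1 x)).1 rfl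
      refine (hπ₁' y (π₁.1 x)).2 ?_
      rw [hupd, hupd]
      have h1 := hsplit j
      have h2 := hsplit (π₁.1 x)
      simp only [Finset.mem_filter, Finset.mem_univ, true_and]
      rcases lt_trichotomy j (π₁.1 x) with h | h | h
      · have hm := hmono j (π₁.1 x) h
        rw [if_pos h, if_pos h.le]
        split_ifs at hx <;> omega
      · rw [← h] at hx1 hx2 ⊢
        rw [if_neg (lt_irrefl j), if_pos le_rfl]
        split_ifs at hx <;> omega
      · have hm := hmono (π₁.1 x) j h
        rw [if_neg (asymm h), if_neg (not_le.2 h)]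
        split_ifs at hx <;> omega
    have hiff : ospAct σ μ = π₁ ↔ ospAct σ' μ' = π₁' := by
      rw [ospAct_eq_iff_s13, ospAct_eq_iff_s13]
      constructor
      · intro h x
        rw [hμ' x, h (Fin.castLE (Nat.sub_le n 1) x)]
        refine (hB (σ' x) (σ (Fin.castLE (Nat.sub_le n 1) x)) ?_).symm
        have hne : (σ (Fin.castLE (Nat.sub_le n 1) x) : ℕ) ≠ (a : ℕ) := by
          intro hval
          have heq : σ (Fin.castLE (Nat.sub_le n 1) x) = a := Fin.ext hval
          rw [ha] at heq
          have := congrArg Fin.val (σ.injective heq)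
          have hx2 := x.2
          simp at this
          omega
        have h1 := hσ' x
        split_ifs at h1 ⊢ <;> omega
      · intro h x
        by_cases hx : (x : ℕ) = n - 1
        · have hx' : x = ⟨n - 1, hn1⟩ := Fin.ext hx
          rw [hx', ← ha, hja, hj]
        · have hxlt : (x : ℕ) < n - 1 := by have := x.2; omega
          have hcast : Fin.castLE (Nat.sub_le n 1) ⟨(x : ℕ), hxlt⟩ = x := Fin.ext rfl
          have hy := h ⟨(x : ℕ), hxlt⟩
          rw [hμ' ⟨(x : ℕ), hxlt⟩, hcast] at hy
          rw [hy]
          refine hB (σ' ⟨(x : ℕ), hxlt⟩) (σ x) ?_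
          have hne : (σ x : ℕ) ≠ (a : ℕ) := by
            intro hval
            have heq : σ x = a := Fin.ext hval
            rw [ha] at heq
            have := congrArg Fin.val (σ.injective heq)
            simp at this
            omega
          have h1 := hσ' ⟨(x : ℕ), hxlt⟩
          rw [hcast] at h1
          split_ifs at h1 ⊢ <;> omega
    rw [if_pos hja]
    simp only [charM, Matrix.of_apply]
    rw [if_congr hiff rfl rfl]
  · rw [if_neg hja]
    simp only [charM, Matrix.of_apply]
    rw [if_neg]
    intro hcontra
    apply hja
    have h2 := (ospAct_eq_iff_s13 σ μ π₁).1 hcontra ⟨n - 1, hn1⟩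
    rw [ha, ← h2]
    exact hj.symm
end
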